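/- arXiv:2105.06127 — 3 statements merged into one kernel-verified Lean document; each statement's English description precedes it below -/
import Mathlib

section
/- Let K be a nonempty set. The set 𝒜 of all atoms of ℙ^K generates ℙ^K as an additive semigroup; that is, the additive subsemigroup of (K → ℕ+) generated by the set of atoms is the whole semigroup. -/
/-- The set `𝒜` of all atoms of `ℙ^K` (for `K` nonempty) generates `ℙ^K`
as an additive semigroup. -/
theorem closure_atoms_eq_top {K : Type*} [Nonempty K] :
    AddSubsemigroup.closure {a : K → ℕ+ | ¬∃ b c : K → ℕ+, a = b + c} = ⊤ := by
  obtain ⟨k₀⟩ := ‹Nonempty K›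
  rw [eq_top_iff]
  rintro f -
  suffices h : ∀ n (f : K → ℕ+), (f k₀ : ℕ) ≤ n →
      f ∈ AddSubsemigroup.closure {a : K → ℕ+ | ¬∃ b c : K → ℕ+, a = b + c} from
    h (f k₀) f le_rfl
  intro n
  induction n with
  | zero => intro f hf; have := (f k₀).pos; omega
  | succ n ih =>
    intro f hf
    by_cases hatom : ∃ k, f k = 1
    · apply AddSubsemigroup.subset_closure
      rintro ⟨b, c, rfl⟩
      obtain ⟨k, hk⟩ := hatom
      have h1 : b k + c k = 1 := hk
      have h2 : ((b k : ℕ) + (c k : ℕ)) = 1 := by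
        exact_mod_cast congrArg (fun x : ℕ+ => (x : ℕ)) h1
      have := (b k).pos
      have := (c k).pos
      omega
    · push_neg at hatom
      have h2 : ∀ k, 2 ≤ (f k : ℕ) := by
        intro k
        have h3 : (f k : ℕ) ≠ 1 := by
          intro h
          exact hatom k (by exact_mod_cast PNat.coe_injective (by simpa using h))
        have := (f k).pos
        omega
      set g : K → ℕ+ := fun k => ⟨(f k : ℕ) - 1, by have := h2 k; omega⟩ with hg
      have hfg : f = (fun _ => (1 : ℕ+)) + g := by
        funext k
        apply PNat.coe_injective
        show (f k : ℕ) = (((1 : ℕ+) + g k : ℕ+) : ℕ)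
        rw [PNat.add_coe]
        show (f k : ℕ) = 1 + ((f k : ℕ) - 1)
        have := h2 k
        omega
      rw [hfg]
      refine AddSubsemigroup.add_mem _ (AddSubsemigroup.subset_closure ?_) (ih g ?_)
      · rintro ⟨b, c, hbc⟩
        have h1 : b k₀ + c k₀ = 1 := by
          have := congrFun hbc k₀
          exact this.symm
        have h3 : ((b k₀ : ℕ) + (c k₀ : ℕ)) = 1 := by
          exact_mod_cast congrArg (fun x : ℕ+ => (x : ℕ)) h1
        have := (b k₀).pos
        have := (c k₀).pos
        omega
      · show ((f k₀ : ℕ) - 1) ≤ n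
        have := h2 k₀
        omega
end

section
/- Let K be a nonempty set, let 𝒜 be the set of atoms of ℙ^K, and let X⁺ be the free semigroup on the alphabet {x_a : a ∈ 𝒜}. Let R be the set of relations x_a x_b = x_𝟙^m x_c for atoms a, b, where m = μ(a+b) − 1 and c = a + b − m • 𝟙. Then for every word w ∈ X⁺ there exist m ∈ ℕ and an atom a ∈ 𝒜 such that w and the word x_𝟙^m x_a (m copies of x_𝟙 followed by x_a; just x_a when m = 0) are related under the smallest congruence on X⁺ containing R. -/
/-- The set of atoms of `ℙ^K`. -/
def PAtoms (K : Type*) : Type _ := {a : K → ℕ+ // ¬∃ b c : K → ℕ+, a = b + c}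

/-- `prependPow x m w` is the word `x^m * w`, i.e. `m` copies of the letter `x`
followed by the word `w` (just `w` when `m = 0`). -/
def prependPow {α : Type*} (x : α) : ℕ → FreeSemigroup α → FreeSemigroup α
  | 0, w => w
  | m + 1, w => FreeSemigroup.of x * prependPow x m w

/-- The set of relations `R`: the pairs `(x_a x_b, x_𝟙^m x_c)` where `a, b, c`
are atoms, `m = μ(a + b) - 1`, and `c = a + b - m • 𝟙`
(i.e. `a k + b k = m + c k` for all `k`).  Here `one` denotes the letter `x_𝟙`. -/
def PRel {K : Type*} (one : PAtoms K) (u v : FreeSemigroup (PAtoms K)) : Prop :=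
  ∃ (a b c : PAtoms K) (m : ℕ),
    m = (⨅ k : K, ((a.1 k : ℕ) + (b.1 k : ℕ))) - 1 ∧
    (∀ k : K, (a.1 k : ℕ) + (b.1 k : ℕ) = m + (c.1 k : ℕ)) ∧
    u = FreeSemigroup.of a * FreeSemigroup.of b ∧
    v = prependPow one m (FreeSemigroup.of c)

lemma prependPow_mul {α : Type*} (x : α) (m : ℕ) (u v : FreeSemigroup α) :
    prependPow x m u * v = prependPow x m (u * v) := by
  induction m with
  | zero => rfl
  | succ m ih => simp only [prependPow, mul_assoc, ih]

lemma prependPow_add {α : Type*} (x : α) (m n : ℕ) (u : FreeSemigroup α) :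
    prependPow x (m + n) u = prependPow x m (prependPow x n u) := by
  induction m with
  | zero => simp [prependPow]
  | succ m ih => rw [Nat.succ_add]; simp only [prependPow, ih]

lemma conGen_prepend {α : Type*} {r : FreeSemigroup α → FreeSemigroup α → Prop}
    (x : α) (m : ℕ) {u v : FreeSemigroup α} (h : conGen r u v) :
    conGen r (prependPow x m u) (prependPow x m v) := by
  induction m with
  | zero => exact h
  | succ m ih => exact (conGen r).mul ((conGen r).refl _) ih

lemma exists_rel {K : Type*} [Nonempty K] (one : PAtoms K) (a b : PAtoms K) :
    ∃ (m : ℕ) (c : PAtoms K),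
      PRel one (FreeSemigroup.of a * FreeSemigroup.of b)
        (prependPow one m (FreeSemigroup.of c)) := by
  set f : K → ℕ := fun k => (a.1 k : ℕ) + (b.1 k : ℕ) with hf
  have hmem : (⨅ k, f k) ∈ Set.range f := Nat.sInf_mem (Set.range_nonempty f)
  obtain ⟨k₀, hk₀⟩ := hmem
  have hle : ∀ k, (⨅ k, f k) ≤ f k := fun k => Nat.sInf_le ⟨k, rfl⟩
  have h2 : 2 ≤ f k₀ := by
    have := (a.1 k₀).pos
    have := (b.1 k₀).pos
    show 2 ≤ (a.1 k₀ : ℕ) + (b.1 k₀ : ℕ)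
    omega
  set M := ⨅ k, f k with hM
  set m := M - 1 with hm
  have hM2 : 2 ≤ M := hk₀ ▸ h2
  have hck : ∀ k, 1 ≤ f k - m := by
    intro k
    have := hle k
    omega
  set c : K → ℕ+ := fun k => ⟨f k - m, hck k⟩ with hc
  have hcatom : ¬∃ b₁ b₂ : K → ℕ+, c = b₁ + b₂ := by
    rintro ⟨b₁, b₂, hbc⟩
    have h1 : c k₀ = b₁ k₀ + b₂ k₀ := by rw [hbc]; rfl
    have h2' : (c k₀ : ℕ) = 1 := by
      simp only [hc, PNat.mk_ofNat]
      show f k₀ - m = 1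
      omega
    have := (b₁ k₀).pos
    have := (b₂ k₀).pos
    have : (c k₀ : ℕ) = (b₁ k₀ : ℕ) + (b₂ k₀ : ℕ) := by rw [h1]; rfl
    omega
  refine ⟨m, ⟨c, hcatom⟩, a, b, ⟨c, hcatom⟩, m, rfl, fun k => ?_, rfl, rfl⟩
  show f k = m + (f k - m)
  have := hle k
  omega

lemma step_lemma {K : Type*} [Nonempty K] (one : PAtoms K) :
    ∀ (n : ℕ) (a b : PAtoms K),
      ∃ (m : ℕ) (c : PAtoms K),
        conGen (PRel one) (FreeSemigroup.of a * prependPow one n (FreeSemigroup.of b))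
          (prependPow one m (FreeSemigroup.of c)) := by
  intro n
  induction n with
  | zero =>
    intro a b
    obtain ⟨m, c, h⟩ := exists_rel one a b
    exact ⟨m, c, ConGen.Rel.of _ _ h⟩
  | succ n ih =>
    intro a b
    obtain ⟨m₁, c₁, h₁⟩ := exists_rel one a one
    obtain ⟨m₂, c₂, h₂⟩ := ih c₁ b
    refine ⟨m₁ + m₂, c₂, ?_⟩
    have e1 : FreeSemigroup.of a * prependPow one (n + 1) (FreeSemigroup.of b)
        = (FreeSemigroup.of a * FreeSemigroup.of one) * prependPow one n (FreeSemigroup.of b) := by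
      simp only [prependPow, mul_assoc]
    rw [e1]
    have s1 : conGen (PRel one)
        ((FreeSemigroup.of a * FreeSemigroup.of one) * prependPow one n (FreeSemigroup.of b))
        (prependPow one m₁ (FreeSemigroup.of c₁) * prependPow one n (FreeSemigroup.of b)) :=
      (conGen (PRel one)).mul (ConGen.Rel.of _ _ h₁) ((conGen (PRel one)).refl _)
    rw [prependPow_mul] at s1
    have s2 := conGen_prepend one m₁ h₂
    rw [← prependPow_add] at s2
    exact (conGen (PRel one)).trans s1 s2

/-- **Lemma 4.** Every word `w` over the alphabet `{x_a : a ∈ 𝒜}` is related,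
under the congruence generated by `R`, to a word of the form `x_𝟙^m x_a` for
some `m ∈ ℕ` and some atom `a`. -/
theorem word_normal_form {K : Type*} [Nonempty K]
    (one : PAtoms K) (hone : one.1 = fun _ => 1) (w : FreeSemigroup (PAtoms K)) :
    ∃ (m : ℕ) (a : PAtoms K),
      conGen (PRel one) w (prependPow one m (FreeSemigroup.of a)) := by
  induction w using FreeSemigroup.recOnMul with
  | ih1 x => exact ⟨0, x, (conGen (PRel one)).refl _⟩
  | ih2 x y hx hy =>
    obtain ⟨m, b, hb⟩ := hy
    obtain ⟨m', c, hc⟩ := step_lemma one m x b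
    exact ⟨m', c,
      (conGen (PRel one)).trans
        ((conGen (PRel one)).mul ((conGen (PRel one)).refl _) hb) hc⟩
end

section
/- Let K be a nonempty set and let 𝒜 be the set of atoms of ℙ^K. The semigroup homomorphism φ from the free semigroup on 𝒜 to ℙ^K determined by φ(x_a) = a for each atom a (obtained via the universal property of the free semigroup, with ℙ^K regarded multiplicatively via Multiplicative) is surjective. -/
/-!
A function taking the value `1` somewhere is an atom, since a sum of positive integers is never
`1`. Otherwise every value is at least `2`, so `g = g' + 1` where the constant `1` is an atom
(here `K` must be nonempty) and `g'` is smaller at a fixed point `k₀`; induction on `g k₀`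
writes `g` as a sum of atoms.
-/

namespace PAtoms

variable {K : Type*}

theorem not_exists_eq_add_of_eq_one {g : K → ℕ+} {k : K} (hk : g k = 1) :
    ¬∃ b c : K → ℕ+, g = b + c := by
  rintro ⟨b, c, rfl⟩
  exact ((one_le : 1 ≤ b k).trans_lt (PNat.lt_add_right _ _)).ne' hk

theorem exists_eq_add_one_of_forall_ne_one {g : K → ℕ+} (hg : ∀ k, g k ≠ 1) :
    ∃ g' : K → ℕ+, g = g' + 1 := by
  choose g' hg' using fun k => PNat.exists_eq_succ_of_ne_one (hg k)
  exact ⟨g', funext hg'⟩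

def one [Nonempty K] : PAtoms K :=
  ⟨1, not_exists_eq_add_of_eq_one (k := Classical.arbitrary K) rfl⟩

theorem ofAdd_mem_range_lift [Nonempty K] (g : K → ℕ+) :
    Multiplicative.ofAdd g ∈
      Set.range (FreeSemigroup.lift fun a : PAtoms K => Multiplicative.ofAdd a.1) := by
  obtain ⟨k₀⟩ := ‹Nonempty K›
  induction g using (measure fun g : K → ℕ+ => (g k₀ : ℕ)).wf.induction with
  | h g ih =>
    by_cases hg : ∃ k, g k = 1
    · obtain ⟨k, hk⟩ := hg
      exact ⟨.of ⟨g, not_exists_eq_add_of_eq_one hk⟩, rfl⟩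
    · push Not at hg
      obtain ⟨g', rfl⟩ := exists_eq_add_one_of_forall_ne_one hg
      obtain ⟨x, hx⟩ := ih g' (PNat.lt_add_right (g' k₀) 1)
      exact ⟨x * .of one, by rw [map_mul, hx]; rfl⟩

end PAtoms

/-- The homomorphism `φ` from the free semigroup on the set `𝒜` of atoms of
`ℙ^K` to `ℙ^K` (regarded multiplicatively) sending each letter `x_a` to the
atom `a` is surjective. -/
theorem phi_surjective {K : Type*} [Nonempty K] :
    Function.Surjective
      (FreeSemigroup.lift
        (fun a : PAtoms K => Multiplicative.ofAdd a.1) :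
        FreeSemigroup (PAtoms K) →ₙ* Multiplicative (K → ℕ+)) :=
  fun g => PAtoms.ofAdd_mem_range_lift (Multiplicative.toAdd g)
end
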